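/- Let Y₁, ..., Y_I ⊂ ℝⁿ be a maximal equidistant spacing with I ≥ 3 whose centers do not all coincide, with radii r₁, ..., r_I. Then class i is the inner class (c_i lies in the convex hull of the other centers) if and only if r_i > √2/2, if and only if r_i = max_j r_j. -/

import Mathlib

open RealInnerProductSpace

/-- A family of sets in ℝⁿ is an equidistant spacing if any two points from
distinct classes are at Euclidean distance exactly 1. -/
def IsEquidistant {n I : ℕ} (Y : Fin I → Set (EuclideanSpace ℝ (Fin n))) : Prop :=
  ∀ i j : Fin I, i ≠ j → ∀ yi ∈ Y i, ∀ yj ∈ Y j, ‖yi - yj‖ = 1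

/-- An equidistant spacing is maximal if it cannot be enlarged class-wise while
remaining an equidistant spacing. -/
def IsMaximalEquidistant {n I : ℕ} (Y : Fin I → Set (EuclideanSpace ℝ (Fin n))) : Prop :=
  IsEquidistant Y ∧
    ∀ Y' : Fin I → Set (EuclideanSpace ℝ (Fin n)),
      IsEquidistant Y' → (∀ i, Y i ⊆ Y' i) → ∀ i, Y' i = Y i

/-!
Put `s i = 1/2 - r i ^ 2`, so that `‖c j - c k‖ ^ 2 = s j + s k` for `j ≠ k`. Maximality puts every
center in the affine span of the other centers: the offset `w` of `c i` from that span is orthogonal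
to every `y - c j`, so if `w ≠ 0` some point `c i + t • w` is at distance 1 from all other classes
without lying on the sphere of radius `r i` around `c i`.

For weights of sum zero, `‖∑ w j • c j‖ ^ 2 = ∑ w j ^ 2 * s j`. Hence any affine representation
`c i = ∑ u j • c j` of a center by the others has `u k * s k = -s i`, and some `s m` is negative
unless all centers coincide. As `s j + s k ≥ 0`, all other `s j` are positive, so the weights of
`c m` are positive and `c m` is inner, while for `i ≠ m` and a third index `k` the functional
`⟪·, c i - c k⟫` is strictly larger at `c i` than at every other center.
-/

open Finset

section
variable {F : Type*} [NormedAddCommGroup F] [InnerProductSpace ℝ F]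

theorem inner_eq_of_mem_affineSpan {S : Set F} {v : F} {k : ℝ} (h : ∀ y ∈ S, ⟪v, y⟫ = k)
    {x : F} (hx : x ∈ affineSpan ℝ S) : ⟪v, x⟫ = k :=
  AffineMap.eqOn_affineSpan (f := (innerₛₗ ℝ v).toAffineMap) (g := AffineMap.const ℝ F k) h hx

theorem norm_sub_sq_sub_norm_sub_sq_eq_of_mem_affineSpan {S : Set F} {a b : F} {k : ℝ}
    (h : ∀ y ∈ S, ‖y - a‖ ^ 2 - ‖y - b‖ ^ 2 = k) {x : F} (hx : x ∈ affineSpan ℝ S) :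
    ‖x - a‖ ^ 2 - ‖x - b‖ ^ 2 = k := by
  have expand : ∀ y : F, ‖y - a‖ ^ 2 - ‖y - b‖ ^ 2 = 2 * ⟪b - a, y⟫ + (‖a‖ ^ 2 - ‖b‖ ^ 2) := by
    intro y
    rw [norm_sub_sq_real, norm_sub_sq_real, inner_sub_left, real_inner_comm y a,
      real_inner_comm y b]
    ring
  have hinner := inner_eq_of_mem_affineSpan (k := (k - (‖a‖ ^ 2 - ‖b‖ ^ 2)) / 2)
    (fun y hy => by rw [← h y hy, expand]; ring) hx
  rw [expand, hinner]
  ring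

end

theorem exists_weights_of_mem_affineSpan_image {ι V : Type*} [Fintype ι] [AddCommGroup V]
    [Module ℝ V] {c : ι → V} {S : Set ι} {x : V} (hx : x ∈ affineSpan ℝ (c '' S)) :
    ∃ u : ι → ℝ, (∀ j ∉ S, u j = 0) ∧ ∑ j, u j = 1 ∧ x = ∑ j, u j • c j := by
  classical
  obtain ⟨t, w, htS, hw, rfl⟩ := eq_affineCombination_of_mem_affineSpan_image hx
  have hsum : ∑ j, Set.indicator (↑t) w j = 1 := by
    rw [← hw, ← sum_indicator_subset w t.subset_univ]
  refine ⟨Set.indicator (↑t) w, fun j hj => Set.indicator_of_notMem (fun h => hj (htS h)) w,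
    hsum, ?_⟩
  rw [affineCombination_indicator_subset w c t.subset_univ,
    affineCombination_eq_linear_combination _ _ _ hsum]

section Spacing

variable {n I : ℕ} {Y : Fin I → Set (EuclideanSpace ℝ (Fin n))}
  {c : Fin I → EuclideanSpace ℝ (Fin n)} {r : Fin I → ℝ}

theorem radius_nonneg_of_mem_affineSpan {i : Fin I} (hc : c i ∈ affineSpan ℝ (Y i))
    (hr : ∀ y ∈ Y i, ‖y - c i‖ = r i) : 0 ≤ r i := by
  obtain ⟨y, hy⟩ := (affineSpan_nonempty ℝ).1 ⟨_, hc⟩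
  exact hr y hy ▸ norm_nonneg _

namespace IsEquidistant

theorem norm_center_sub_sq (hY : IsEquidistant Y) (hc : ∀ i, c i ∈ affineSpan ℝ (Y i))
    (hr : ∀ i, ∀ y ∈ Y i, ‖y - c i‖ = r i) {i j : Fin I} (hij : i ≠ j) {y} (hy : y ∈ Y j) :
    ‖c i - y‖ ^ 2 = 1 - r i ^ 2 := by
  have h := norm_sub_sq_sub_norm_sub_sq_eq_of_mem_affineSpan (a := y) (b := c i)
    (fun z hz => by rw [hY i j hij z hz y hy, hr i z hz, one_pow]) (hc i)
  simpa using h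

theorem norm_center_sub_center_sq (hY : IsEquidistant Y) (hc : ∀ i, c i ∈ affineSpan ℝ (Y i))
    (hr : ∀ i, ∀ y ∈ Y i, ‖y - c i‖ = r i) {i j : Fin I} (hij : i ≠ j) :
    ‖c i - c j‖ ^ 2 = 1 - r i ^ 2 - r j ^ 2 := by
  have h := norm_sub_sq_sub_norm_sub_sq_eq_of_mem_affineSpan (a := c i) (b := c j)
    (fun z hz => by rw [norm_sub_rev, hY.norm_center_sub_sq hc hr hij hz, hr j z hz]) (hc j)
  simpa [norm_sub_rev] using h

theorem inner_sub_center_center_sub_center (hY : IsEquidistant Y)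
    (hc : ∀ i, c i ∈ affineSpan ℝ (Y i)) (hr : ∀ i, ∀ y ∈ Y i, ‖y - c i‖ = r i)
    {j k : Fin I} (hjk : j ≠ k) {y} (hy : y ∈ Y j) : ⟪y - c j, c k - c j⟫ = 0 := by
  have h := norm_sub_sq_sub_norm_sub_sq_eq_of_mem_affineSpan (a := y) (b := c j) (k := r j ^ 2)
    (fun z hz => by
      rw [hY k j hjk.symm z hz y hy, norm_sub_rev, hY.norm_center_sub_sq hc hr hjk hz]; ring)
    (hc k)
  rw [← sub_sub_sub_cancel_right (c k) y (c j), norm_sub_sq_real, ← hr j y hy,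
    real_inner_comm] at h
  linarith

theorem sub_center_mem_orthogonal (hY : IsEquidistant Y) (hc : ∀ i, c i ∈ affineSpan ℝ (Y i))
    (hr : ∀ i, ∀ y ∈ Y i, ‖y - c i‖ = r i) {j : Fin I} {y} (hy : y ∈ Y j) :
    y - c j ∈ (vectorSpan ℝ (Set.range c))ᗮ := by
  rw [Submodule.mem_orthogonal']
  intro v hv
  rw [vectorSpan_range_eq_span_range_vsub_right ℝ c j] at hv
  refine Submodule.span_le (p := LinearMap.ker (innerₛₗ ℝ (y - c j))) |>.2 ?_ hv
  rintro - ⟨k, rfl⟩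
  by_cases hjk : j = k
  · simp [hjk]
  · exact hY.inner_sub_center_center_sub_center hc hr hjk hy

end IsEquidistant

namespace IsMaximalEquidistant

theorem mem_of_forall_norm_sub_eq_one (hY : IsMaximalEquidistant Y) {i : Fin I} {x}
    (hx : ∀ j, j ≠ i → ∀ y ∈ Y j, ‖x - y‖ = 1) : x ∈ Y i := by
  classical
  set Y' := Function.update Y i (insert x (Y i))
  have hsub : ∀ j, Y j ⊆ Y' j := by
    intro j
    by_cases hj : j = i
    · subst hj
      simp [Y', Set.subset_insert x (Y j)]
    · simp [Y', hj]
  have hY' : IsEquidistant Y' := by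
    intro a b hab ya hya yb hyb
    simp only [Y', Function.update_apply] at hya hyb
    split_ifs at hya hyb with ha hb hb
    · exact absurd (ha.trans hb.symm) hab
    · subst ha
      rcases hya with rfl | hya
      · exact hx b (Ne.symm hab) yb hyb
      · exact hY.1 _ _ hab ya hya yb hyb
    · subst hb
      rcases hyb with rfl | hyb
      · rw [norm_sub_rev]; exact hx a hab ya hya
      · exact hY.1 _ _ hab ya hya yb hyb
    · exact hY.1 a b hab ya hya yb hyb
  have h := hY.2 Y' hY' hsub i
  simp only [Y', Function.update_self] at h
  exact Set.insert_eq_self.1 h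

theorem eq_zero_of_forall_inner_eq_norm_sq (hY : IsMaximalEquidistant Y)
    (hc : ∀ i, c i ∈ affineSpan ℝ (Y i)) (hr : ∀ i, ∀ y ∈ Y i, ‖y - c i‖ = r i) {i : Fin I}
    {w : EuclideanSpace ℝ (Fin n)} (hw : ∀ j, j ≠ i → ∀ y ∈ Y j, ⟪c i - y, w⟫ = ‖w‖ ^ 2) :
    w = 0 := by
  by_contra hw0
  have hwpos : 0 < ‖w‖ ^ 2 := by positivity
  -- the root `t ≤ -1` of `(t ^ 2 + 2 * t) * ‖w‖ ^ 2 = r i ^ 2`, nonzero even when `r i = 0`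
  set t : ℝ := -1 - √(1 + r i ^ 2 / ‖w‖ ^ 2)
  have ht : (t ^ 2 + 2 * t) * ‖w‖ ^ 2 = r i ^ 2 := by
    have hsq := Real.sq_sqrt (show 0 ≤ 1 + r i ^ 2 / ‖w‖ ^ 2 by positivity)
    have : t ^ 2 + 2 * t = r i ^ 2 / ‖w‖ ^ 2 := by simp only [t]; nlinarith
    rw [this, div_mul_cancel₀ _ hwpos.ne']
  have ht1 : t ≤ -1 := by simp only [t]; linarith [Real.sqrt_nonneg (1 + r i ^ 2 / ‖w‖ ^ 2)]
  have hmem : c i + t • w ∈ Y i := hY.mem_of_forall_norm_sub_eq_one fun j hj y hy => by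
    have h := norm_add_sq_real (c i - y) (t • w)
    rw [hY.1.norm_center_sub_sq hc hr (Ne.symm hj) hy, real_inner_smul_right, hw j hj y hy,
      norm_smul, mul_pow, Real.norm_eq_abs, sq_abs, show c i - y + t • w = c i + t • w - y by abel]
      at h
    exact (sq_eq_sq₀ (norm_nonneg _) zero_le_one).1 (by linarith)
  have hrad := hr i _ hmem
  rw [add_sub_cancel_left, norm_smul, Real.norm_eq_abs] at hrad
  have : t ^ 2 * ‖w‖ ^ 2 = r i ^ 2 := by rw [← hrad, mul_pow, sq_abs]
  nlinarith

theorem center_mem_affineSpan (hY : IsMaximalEquidistant Y)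
    (hc : ∀ i, c i ∈ affineSpan ℝ (Y i)) (hr : ∀ i, ∀ y ∈ Y i, ‖y - c i‖ = r i)
    {i j₀ : Fin I} (hj₀ : j₀ ≠ i) : c i ∈ affineSpan ℝ (c '' {j | j ≠ i}) := by
  set W := affineSpan ℝ (c '' {j | j ≠ i})
  have hmemW : ∀ j, j ≠ i → c j ∈ W := fun j hj => subset_affineSpan ℝ _ ⟨j, hj, rfl⟩
  have : Nonempty W := ⟨⟨c j₀, hmemW j₀ hj₀⟩⟩
  set p : EuclideanSpace ℝ (Fin n) := ↑(EuclideanGeometry.orthogonalProjection W (c i))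
  have hpW : p ∈ W := (EuclideanGeometry.orthogonalProjection W (c i)).2
  have hwW : c i - p ∈ W.directionᗮ :=
    EuclideanGeometry.vsub_orthogonalProjection_mem_direction_orthogonal W (c i)
  have hwD : c i - p ∈ vectorSpan ℝ (Set.range c) := by
    rw [← direction_affineSpan]
    exact AffineSubspace.vsub_mem_direction (subset_affineSpan ℝ _ (Set.mem_range_self i))
      (affineSpan_mono ℝ (Set.image_subset_range _ _) hpW)
  suffices c i - p = 0 by rw [sub_eq_zero.1 this]; exact hpW
  refine hY.eq_zero_of_forall_inner_eq_norm_sq (i := i) hc hr fun j hj y hy => ?_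
  have h₁ : ⟪p - c j, c i - p⟫ = 0 :=
    Submodule.inner_right_of_mem_orthogonal (AffineSubspace.vsub_mem_direction hpW (hmemW j hj)) hwW
  have h₂ : ⟪y - c j, c i - p⟫ = 0 :=
    Submodule.inner_left_of_mem_orthogonal hwD (hY.1.sub_center_mem_orthogonal hc hr hy)
  calc ⟪c i - y, c i - p⟫ = ⟪c i - p, c i - p⟫ + ⟪p - c j, c i - p⟫ - ⟪y - c j, c i - p⟫ := by
        rw [← inner_add_left, ← inner_sub_left]; congr 1; abel
    _ = ‖c i - p‖ ^ 2 := by rw [h₁, h₂, real_inner_self_eq_norm_sq]; ring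

end IsMaximalEquidistant

end Spacing

def SqDistSplits {ι F : Type*} [NormedAddCommGroup F] (c : ι → F) (s : ι → ℝ) : Prop :=
  ∀ j k, j ≠ k → ‖c j - c k‖ ^ 2 = s j + s k

namespace SqDistSplits

section
variable {ι F : Type*} [NormedAddCommGroup F] {c : ι → F} {s : ι → ℝ}

theorem pos_of_ne_of_neg (hs : SqDistSplits c s) {m : ι} (hm : s m < 0) {j : ι} (hj : j ≠ m) :
    0 < s j := by
  linarith [hs j m hj, sq_nonneg ‖c j - c m‖]

variable [InnerProductSpace ℝ F]

theorem inner_sub_sub_of_ne (hs : SqDistSplits c s) {i j k : ι} (hji : j ≠ i) (hki : k ≠ i)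
    (hjk : j ≠ k) : ⟪c i - c j, c i - c k⟫ = s i := by
  have h := norm_sub_sq_real (c i - c j) (c i - c k)
  rw [sub_sub_sub_cancel_left, hs k j hjk.symm, hs i j hji.symm, hs i k hki.symm] at h
  linarith

theorem notMem_convexHull_of_pos (hs : SqDistSplits c s) {i k : ι} (hki : k ≠ i) (hi : 0 < s i)
    (hk : 0 < s k) : c i ∉ convexHull ℝ (c '' {j | j ≠ i}) := by
  intro hmem
  obtain ⟨-, ⟨j, hji, rfl⟩, hle⟩ := ((innerₛₗ ℝ (c i - c k)).convexOn convex_univ)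
    |>.exists_ge_of_mem_convexHull (Set.subset_univ _) hmem
  have hneg : ⟪c i - c j, c i - c k⟫ ≤ 0 := by
    rw [real_inner_comm, inner_sub_right, sub_nonpos]
    exact hle
  by_cases hjk : j = k
  · rw [hjk, real_inner_self_eq_norm_sq, hs i k hki.symm] at hneg
    linarith
  · rw [hs.inner_sub_sub_of_ne hji hki hjk] at hneg
    linarith

variable [Fintype ι]

theorem norm_sum_smul_sq_of_sum_eq_zero (hs : SqDistSplits c s) {w : ι → ℝ}
    (hw : ∑ j, w j = 0) : ‖∑ j, w j • c j‖ ^ 2 = ∑ j, w j ^ 2 * s j := by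
  classical
  have hd : ∀ j k, ‖c j - c k‖ * ‖c j - c k‖ = s j + s k - if j = k then 2 * s j else 0 := by
    intro j k
    split_ifs with h
    · rw [h, sub_self, norm_zero, mul_zero]; ring
    · rw [← sq, hs j k h]; ring
  have hrow : ∀ j, ∑ k, w j * w k * (s j + s k) = w j * s j * ∑ k, w k + w j * ∑ k, w k * s k := by
    intro j
    rw [mul_sum, mul_sum, ← sum_add_distrib]
    exact sum_congr rfl fun k _ => by ring
  have hcross : ∑ j, ∑ k, w j * w k * (s j + s k) = 0 := by
    simp only [hrow, hw, mul_zero, zero_add, ← sum_mul, zero_mul]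
  rw [← real_inner_self_eq_norm_sq, inner_sum_smul_sum_smul_of_sum_eq_zero c hw c hw]
  simp only [hd, mul_sub, sum_sub_distrib, hcross, mul_ite, mul_zero, sum_ite_eq, mem_univ, if_true]
  rw [zero_sub, neg_neg, sum_div]
  exact sum_congr rfl fun j _ => by ring

theorem norm_sub_sum_smul_sq (hs : SqDistSplits c s) (i : ι) {u : ι → ℝ} (hu : ∑ j, u j = 1) :
    ‖c i - ∑ j, u j • c j‖ ^ 2 = s i * (1 - 2 * u i) + ∑ j, u j ^ 2 * s j := by
  classical
  set w : ι → ℝ := fun j => (if j = i then 1 else 0) - u j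
  have hw : ∑ j, w j = 0 := by simp [w, sum_sub_distrib, hu]
  have hsum : c i - ∑ j, u j • c j = ∑ j, w j • c j := by
    simp [w, sub_smul, sum_sub_distrib, ite_smul]
  rw [hsum, hs.norm_sum_smul_sq_of_sum_eq_zero hw]
  simp only [w, sub_sq, ite_pow, one_pow, ne_eq, OfNat.ofNat_ne_zero, not_false_eq_true, zero_pow,
    mul_ite, mul_one, mul_zero, ite_mul, zero_mul, add_mul, sub_mul, sum_add_distrib,
    sum_sub_distrib, sum_ite_eq', mem_univ, if_true]
  ring

theorem weight_mul_eq_neg (hs : SqDistSplits c s) {i : ι} {u : ι → ℝ} (hu : ∑ j, u j = 1)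
    (hui : u i = 0) (hci : c i = ∑ j, u j • c j) {k : ι} (hki : k ≠ i) : u k * s k = -s i := by
  have hi := hs.norm_sub_sum_smul_sq i hu
  have hk := hs.norm_sub_sum_smul_sq k hu
  rw [← hci, sub_self, norm_zero, hui] at hi
  rw [← hci, hs k i hki] at hk
  linarith

theorem exists_neg (hs : SqDistSplits c s) (hspan : ∀ i, c i ∈ affineSpan ℝ (c '' {j | j ≠ i}))
    (hnc : ¬∀ i j, c i = c j) : ∃ m, s m < 0 := by
  by_contra! hnonneg
  have hzero : ∀ i, s i = 0 := by
    intro i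
    obtain ⟨u, hu0, hu, hci⟩ := exists_weights_of_mem_affineSpan_image (hspan i)
    have h := hs.norm_sub_sum_smul_sq i hu
    rw [← hci, sub_self, norm_zero, hu0 i (by simp)] at h
    have : 0 ≤ ∑ j, u j ^ 2 * s j := sum_nonneg fun j _ => mul_nonneg (sq_nonneg _) (hnonneg j)
    linarith [hnonneg i]
  refine hnc fun i j => ?_
  by_cases hij : i = j
  · exact congrArg c hij
  · have h := hs i j hij
    rwa [hzero, hzero, add_zero, sq_eq_zero_iff, norm_eq_zero, sub_eq_zero] at h

theorem mem_convexHull_of_neg (hs : SqDistSplits c s) {m : ι}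
    (hspan : c m ∈ affineSpan ℝ (c '' {j | j ≠ m})) (hm : s m < 0) :
    c m ∈ convexHull ℝ (c '' {j | j ≠ m}) := by
  classical
  obtain ⟨u, hu0, hu, hcm⟩ := exists_weights_of_mem_affineSpan_image hspan
  have hum : u m = 0 := hu0 m (by simp)
  have hpos : ∀ k, k ≠ m → 0 ≤ u k := fun k hk =>
    nonneg_of_mul_nonneg_left (by linarith [hs.weight_mul_eq_neg hu hum hcm hk])
      (hs.pos_of_ne_of_neg hm hk)
  refine mem_convexHull_of_exists_fintype (fun k : {k // k ≠ m} => u k) (fun k => c k)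
    (fun k => hpos k k.2) ?_ (fun k => ⟨k, k.2, rfl⟩) ?_
  · rw [← sum_subtype (univ.erase m) (by simp) u, sum_erase _ hum, hu]
  · rw [← sum_subtype (univ.erase m) (by simp) (fun k => u k • c k), sum_erase _ (by simp [hum]),
      hcm]

theorem mem_convexHull_iff_neg (hs : SqDistSplits c s)
    (hspan : ∀ i, c i ∈ affineSpan ℝ (c '' {j | j ≠ i})) (hnc : ¬∀ i j, c i = c j)
    (hcard : 3 ≤ Fintype.card ι) (i : ι) : c i ∈ convexHull ℝ (c '' {j | j ≠ i}) ↔ s i < 0 := by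
  classical
  obtain ⟨m, hm⟩ := hs.exists_neg hspan hnc
  by_cases him : i = m
  · subst him
    exact ⟨fun _ => hm, hs.mem_convexHull_of_neg (hspan i)⟩
  · have hi := hs.pos_of_ne_of_neg hm him
    obtain ⟨k, hk, hkm⟩ := exists_mem_ne (s := univ.erase i)
      (by rw [card_erase_of_mem (mem_univ i), card_univ]; omega) m
    exact ⟨fun h => absurd h <| hs.notMem_convexHull_of_pos (ne_of_mem_erase hk) hi
      (hs.pos_of_ne_of_neg hm hkm), fun h => by linarith⟩

end

end SqDistSplits

theorem sqrt_two_div_two_lt_iff {x : ℝ} (hx : 0 ≤ x) : √2 / 2 < x ↔ 1 / 2 < x ^ 2 := by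
  rw [div_lt_iff₀ two_pos, Real.sqrt_lt (by norm_num) (by positivity)]
  constructor <;> intro h <;> nlinarith

theorem inner_class_characterization_general {n I : ℕ} (hI : 3 ≤ I)
    (Y : Fin I → Set (EuclideanSpace ℝ (Fin n)))
    (hmax : IsMaximalEquidistant Y)
    (c : Fin I → EuclideanSpace ℝ (Fin n)) (r : Fin I → ℝ)
    (hc : ∀ i, c i ∈ affineSpan ℝ (Y i))
    (hr : ∀ i, ∀ y ∈ Y i, ‖y - c i‖ = r i)
    (hncoin : ¬ ∀ i j : Fin I, c i = c j) :
    ∀ i : Fin I,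
      (c i ∈ convexHull ℝ (c '' {j | j ≠ i}) ↔ Real.sqrt 2 / 2 < r i) ∧
      (c i ∈ convexHull ℝ (c '' {j | j ≠ i}) ↔ ∀ j, r j ≤ r i) := by
  have hs : SqDistSplits c fun j => 1 / 2 - r j ^ 2 := fun j k hjk => by
    rw [hmax.1.norm_center_sub_center_sq hc hr hjk]; ring
  have hspan : ∀ i, c i ∈ affineSpan ℝ (c '' {j | j ≠ i}) := fun i =>
    have ⟨_, hj₀⟩ := Fintype.exists_ne_of_one_lt_card (by rw [Fintype.card_fin]; omega) i
    hmax.center_mem_affineSpan hc hr hj₀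
  have hr0 : ∀ j, 0 ≤ r j := fun j => radius_nonneg_of_mem_affineSpan (hc j) (hr j)
  obtain ⟨m, hm⟩ := hs.exists_neg hspan hncoin
  intro i
  rw [hs.mem_convexHull_iff_neg hspan hncoin (by rwa [Fintype.card_fin]) i,
    sqrt_two_div_two_lt_iff (hr0 i)]
  refine ⟨by constructor <;> intro h <;> linarith, fun hi j => ?_, fun hle => ?_⟩
  · by_cases hji : j = i
    · rw [hji]
    · nlinarith [hs.pos_of_ne_of_neg hi hji, hr0 i, hr0 j]
  · nlinarith [hle m, hr0 m]

/-- Characterization of the inner class: for a maximal equidistant spacing with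
`I ≥ 3` whose centers do not all coincide, class `i` is inner (its center lies
in the convex hull of the other centers) iff `r i > √2/2` iff `r i` is maximal
among the radii. -/
theorem inner_class_characterization {n I : ℕ} (hI : 3 ≤ I)
    (Y : Fin I → Set (EuclideanSpace ℝ (Fin n)))
    (hne : ∀ i, (Y i).Nonempty) (hmax : IsMaximalEquidistant Y)
    (c : Fin I → EuclideanSpace ℝ (Fin n)) (r : Fin I → ℝ)
    (hc : ∀ i, c i ∈ affineSpan ℝ (Y i))
    (hr : ∀ i, ∀ y ∈ Y i, ‖y - c i‖ = r i)
    (hncoin : ¬ ∀ i j : Fin I, c i = c j) :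
    ∀ i : Fin I,
      (c i ∈ convexHull ℝ (c '' {j | j ≠ i}) ↔ Real.sqrt 2 / 2 < r i) ∧
      (c i ∈ convexHull ℝ (c '' {j | j ≠ i}) ↔ ∀ j, r j ≤ r i) :=
  inner_class_characterization_general hI Y hmax c r hc hr hncoin
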